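/- arXiv:1307.7533 — 7 statements merged into one kernel-verified Lean document; each statement's English description precedes it below -/
import Mathlib

section
/- Let T : ℝ → ℝ be a continuous nondecreasing map with a unique fixed point x⋆ (i.e. T x⋆ = x⋆ and every x with T x = x equals x⋆). Suppose there exist real numbers u and v with u < x⋆ < v such that T u ≥ u and T v ≤ v. Then for every initial value x₀ ∈ ℝ, the sequence defined by x₀ and x_{t+1} = T(x_t) converges to x⋆. -/
/-!
Monotonicity of `T` keeps the orbit on the side of `x⋆` where it starts. Below `x⋆` we have
`y ≤ T y`, since otherwise the intermediate value theorem applied to `T` and `id` between `u`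
and `y` would give a second fixed point; symmetrically `T y ≤ y` above `x⋆`. So the orbit is
monotone and bounded by `x⋆`, hence converges, and by continuity its limit is a fixed point,
namely `x⋆`.
-/

open Filter Function Topology

variable {α : Type*} [ConditionallyCompleteLinearOrder α] [DenselyOrdered α]
  [TopologicalSpace α] [OrderTopology α] {T : α → α} {a u v y : α}

theorem le_map_of_le_unique_fixedPt (hT : Continuous T) (hfix : IsFixedPt T a)
    (huniq : ∀ x, IsFixedPt T x → x = a) (hu : u < a) (hTu : u ≤ T u) (hy : y ≤ a) :
    y ≤ T y := by
  rcases hy.eq_or_lt with rfl | hy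
  · exact hfix.ge
  by_contra! hTy
  obtain ⟨z, hz, hzT⟩ := isPreconnected_uIcc.intermediate_value₂ Set.left_mem_uIcc
    Set.right_mem_uIcc continuous_id.continuousOn hT.continuousOn hTu hTy.le
  have hza : z < a := hz.2.trans_lt (max_lt hu hy)
  exact hza.ne (huniq z hzT.symm)

theorem tendsto_iterate_of_le_unique_fixedPt (hT : Continuous T) (hmono : Monotone T)
    (hfix : IsFixedPt T a) (huniq : ∀ x, IsFixedPt T x → x = a) (hu : u < a) (hTu : u ≤ T u)
    (hy : y ≤ a) : Tendsto (fun n ↦ T^[n] y) atTop (𝓝 a) := by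
  have horbit_mono : Monotone fun n ↦ T^[n] y :=
    hmono.monotone_iterate_of_le_map (le_map_of_le_unique_fixedPt hT hfix huniq hu hTu hy)
  have horbit_le : ∀ n, T^[n] y ≤ a := fun n ↦
    (hmono.iterate n hy).trans_eq (hfix.iterate n)
  have hlim := tendsto_atTop_ciSup horbit_mono ⟨a, Set.forall_mem_range.2 horbit_le⟩
  rwa [huniq _ (isFixedPt_of_tendsto_iterate hlim hT.continuousAt)] at hlim

theorem tendsto_iterate_of_unique_fixedPt_le (hT : Continuous T) (hmono : Monotone T)
    (hfix : IsFixedPt T a) (huniq : ∀ x, IsFixedPt T x → x = a) (hv : a < v) (hTv : T v ≤ v)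
    (hy : a ≤ y) : Tendsto (fun n ↦ T^[n] y) atTop (𝓝 a) :=
  tendsto_iterate_of_le_unique_fixedPt (α := αᵒᵈ) hT hmono.dual hfix huniq hv hTv hy

theorem fixed_point_convergence_general
    (T : ℝ → ℝ) (hcont : Continuous T) (hmono : Monotone T)
    (xstar : ℝ) (hfix : T xstar = xstar)
    (huniq : ∀ x : ℝ, T x = x → x = xstar)
    (u v : ℝ) (hu : u < xstar) (hv : xstar < v)
    (hTu : u ≤ T u) (hTv : T v ≤ v)
    (x : ℕ → ℝ)
    (hrec : ∀ t : ℕ, x (t + 1) = T (x t)) :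
    Filter.Tendsto x Filter.atTop (nhds xstar) := by
  have horbit : x = fun n ↦ T^[n] (x 0) := by
    funext n
    induction n with
    | zero => rfl
    | succ n ih => rw [hrec, ih, iterate_succ_apply']
  rw [horbit]
  rcases le_total (x 0) xstar with h0 | h0
  · exact tendsto_iterate_of_le_unique_fixedPt hcont hmono hfix huniq hu hTu h0
  · exact tendsto_iterate_of_unique_fixedPt_le hcont hmono hfix huniq hv hTv h0

/-- Fixed-point convergence lemma (Lemma 3 of the paper): a continuous nondecreasing
map `T : ℝ → ℝ` with a unique fixed point `x⋆`, such that there exist `u < x⋆ < v`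
with `T u ≥ u` and `T v ≤ v`, has the property that every orbit `x_{t+1} = T (x_t)`
converges to `x⋆`. -/
theorem fixed_point_convergence
    (T : ℝ → ℝ) (hcont : Continuous T) (hmono : Monotone T)
    (xstar : ℝ) (hfix : T xstar = xstar)
    (huniq : ∀ x : ℝ, T x = x → x = xstar)
    (u v : ℝ) (hu : u < xstar) (hv : xstar < v)
    (hTu : u ≤ T u) (hTv : T v ≤ v)
    (x₀ : ℝ) (x : ℕ → ℝ) (hx₀ : x 0 = x₀)
    (hrec : ∀ t : ℕ, x (t + 1) = T (x t)) :
    Filter.Tendsto x Filter.atTop (nhds xstar) :=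
  fixed_point_convergence_general T hcont hmono xstar hfix huniq u v hu hv hTu hTv x hrec
end

section
/- Let a, b, c, d be nonnegative real numbers with a > 0, and define f : (0, ∞) → ℝ by f(x) = (a + b/x) / ((c + √(d + b/x))² + a + b/x). Then (i) f(x) tends to f∞ := a / ((c + √d)² + a) as x → ∞, and (ii) there exists a real number m with 0 < m < ∞ such that f(x) ≤ f∞ + m/x for every x > 0. -/
/-! Write `s = b / x` and `D(s) = (c + √(d + s))² + a + s`, so that the function is
`(a + s) / D(s)`. It is continuous at `s = 0`, which gives the limit. Since `c ≥ 0`, `D` is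
nondecreasing in `s ≥ 0`, so `(a + s) / D(s) ≤ (a + s) / D(0) = f∞ + s / D(0)`; this is the
affine bound with `m = (b + 1) / D(0)`. -/

namespace AffineMajorization

open Filter Topology

noncomputable def ratio (a c d s : ℝ) : ℝ :=
  (a + s) / ((c + √(d + s)) ^ 2 + a + s)

variable {a c d s : ℝ}

lemma ratio_zero (a c d : ℝ) : ratio a c d 0 = a / ((c + √d) ^ 2 + a) := by
  simp [ratio]

lemma continuousAt_ratio_zero (ha : 0 < a) : ContinuousAt (ratio a c d) 0 := by
  have hden : (c + √(d + 0)) ^ 2 + a + 0 ≠ 0 := by positivity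
  unfold ratio
  exact ContinuousAt.div (by fun_prop) (by fun_prop) hden

lemma sq_add_sqrt_add_le (a : ℝ) (hc : 0 ≤ c) (hs : 0 ≤ s) :
    (c + √d) ^ 2 + a ≤ (c + √(d + s)) ^ 2 + a + s := by
  have hsqrt : √d ≤ √(d + s) := Real.sqrt_le_sqrt (by linarith)
  have hsq : (c + √d) ^ 2 ≤ (c + √(d + s)) ^ 2 := by gcongr
  linarith

lemma ratio_le (ha : 0 < a) (hc : 0 ≤ c) (hs : 0 ≤ s) :
    ratio a c d s ≤ a / ((c + √d) ^ 2 + a) + s / ((c + √d) ^ 2 + a) := by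
  have hD : 0 < (c + √d) ^ 2 + a := by positivity
  calc ratio a c d s ≤ (a + s) / ((c + √d) ^ 2 + a) :=
        div_le_div_of_nonneg_left (by positivity) hD (sq_add_sqrt_add_le a hc hs)
    _ = a / ((c + √d) ^ 2 + a) + s / ((c + √d) ^ 2 + a) := add_div _ _ _

end AffineMajorization

open AffineMajorization in
theorem lemma_affine_majorization_general
    (a b c d : ℝ) (ha : 0 < a) (hb : 0 ≤ b) (hc : 0 ≤ c) :
    Filter.Tendsto
      (fun x : ℝ => (a + b / x) / ((c + Real.sqrt (d + b / x)) ^ 2 + a + b / x))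
      Filter.atTop (nhds (a / ((c + Real.sqrt d) ^ 2 + a))) ∧
    ∃ m : ℝ, 0 < m ∧ ∀ x : ℝ, 0 < x →
      (a + b / x) / ((c + Real.sqrt (d + b / x)) ^ 2 + a + b / x) ≤
        a / ((c + Real.sqrt d) ^ 2 + a) + m / x := by
  have hD : 0 < (c + √d) ^ 2 + a := by positivity
  refine ⟨?_, (b + 1) / ((c + √d) ^ 2 + a), by positivity, fun x hx => ?_⟩
  · have hs : Filter.Tendsto (fun x : ℝ => b / x) Filter.atTop (nhds 0) :=
      tendsto_const_nhds.div_atTop Filter.tendsto_id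
    rw [← ratio_zero]
    exact (continuousAt_ratio_zero ha).tendsto.comp hs
  · calc ratio a c d (b / x)
        ≤ a / ((c + √d) ^ 2 + a) + b / x / ((c + √d) ^ 2 + a) := ratio_le ha hc (by positivity)
      _ ≤ a / ((c + √d) ^ 2 + a) + (b + 1) / ((c + √d) ^ 2 + a) / x := by
        rw [div_right_comm]
        gcongr
        linarith

/-- Lemma 2 of the paper (from [zaidiACC11, Lemma 4.1]): for nonnegative `a, b, c, d`
with `a > 0`, the function `f(x) = (a + b/x) / ((c + √(d + b/x))² + a + b/x)` tends to
`f∞ = a / ((c + √d)² + a)` as `x → ∞`, and there is `0 < m < ∞` with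
`f(x) ≤ f∞ + m/x` for all `x > 0`. -/
theorem lemma_affine_majorization
    (a b c d : ℝ) (ha : 0 < a) (hb : 0 ≤ b) (hc : 0 ≤ c) (hd : 0 ≤ d) :
    Filter.Tendsto
      (fun x : ℝ => (a + b / x) / ((c + Real.sqrt (d + b / x)) ^ 2 + a + b / x))
      Filter.atTop (nhds (a / ((c + Real.sqrt d) ^ 2 + a))) ∧
    ∃ m : ℝ, 0 < m ∧ ∀ x : ℝ, 0 < x →
      (a + b / x) / ((c + Real.sqrt (d + b / x)) ^ 2 + a + b / x) ≤
        a / ((c + Real.sqrt d) ^ 2 + a) + m / x :=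
  lemma_affine_majorization_general a b c d ha hb hc
end

section
/- Let P_S, P_r, N_r, N_d be positive real numbers and, for a positive integer L, define Γ_nec(L) = (1/4)·log(1 + 2·L·P_S/N_r) and Γ_suf(L) = (1/4)·log(1 + 4·L·P_S·P_r/(2·P_S·N_d + 2·P_r·N_r + N_d·N_r)). Then (i) Γ_nec(L) − Γ_suf(L) = (1/4)·log(1 + 2·P_S·N_d·(2·P_S + N_r) / (4·P_S·P_r·N_r + N_r·(2·P_S·N_d + 2·P_r·N_r + N_d·N_r)/L)); (ii) the sequence L ↦ Γ_nec(L) − Γ_suf(L) is nondecreasing in L; and (iii) Γ_nec(L) − Γ_suf(L) tends to (1/4)·log(1 + N_d·(2·P_S + N_r)/(2·P_r·N_r)) as L → ∞. -/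
/-!
Both bounds are of the form `(1/4) log (1 + κ L)`, with `a = 2 P_S / N_r` for `Γ_nec` and
`b = 4 P_S P_r / D` for `Γ_suf`, where `D = 2 P_S N_d + 2 P_r N_r + N_d N_r`. Their difference is
`(1/4) log ((1 + a L) / (1 + b L)) = (1/4) log (1 + (a - b) / (b + 1/L))`, and
`a - b = 2 P_S N_d (2 P_S + N_r) / (N_r D) ≥ 0`, so the gap increases in `L` towards
`(1/4) log (1 + (a - b) / b)`.
-/

open Filter Real Topology

theorem one_add_mul_div_one_add_mul {a b x : ℝ} (hb : 0 ≤ b) (hx : 0 < x) :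
    (1 + a * x) / (1 + b * x) = 1 + (a - b) / (b + x⁻¹) := by
  have : 0 < b + x⁻¹ := by positivity
  field_simp
  ring

theorem log_one_add_mul_sub_log_one_add_mul {a b x : ℝ} (hb : 0 ≤ b) (hab : b ≤ a) (hx : 0 < x) :
    log (1 + a * x) - log (1 + b * x) = log (1 + (a - b) / (b + x⁻¹)) := by
  have ha : 0 ≤ a := hb.trans hab
  rw [← log_div (by positivity) (by positivity), one_add_mul_div_one_add_mul hb hx]

theorem tendsto_one_add_div_add_inv_natCast {b c : ℝ} (hb : b ≠ 0) :
    Tendsto (fun n : ℕ => 1 + c / (b + (n : ℝ)⁻¹)) atTop (𝓝 (1 + c / b)) := by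
  have hinv : Tendsto (fun n : ℕ => b + (n : ℝ)⁻¹) atTop (𝓝 b) := by
    simpa using tendsto_inv_atTop_nhds_zero_nat.const_add b
  exact (tendsto_const_nhds.div hinv hb).const_add 1

theorem two_mul_div_sub_four_mul_div {PS Pr Nr Nd : ℝ} (hNr : Nr ≠ 0)
    (hD : 2 * PS * Nd + 2 * Pr * Nr + Nd * Nr ≠ 0) :
    2 * PS / Nr - 4 * PS * Pr / (2 * PS * Nd + 2 * Pr * Nr + Nd * Nr)
      = 2 * PS * Nd * (2 * PS + Nr) / (Nr * (2 * PS * Nd + 2 * Pr * Nr + Nd * Nr)) := by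
  rw [div_sub_div _ _ hNr hD]
  ring

/-- Proposition 1 of the paper: the gap between the necessary and sufficient
stabilization bounds for a symmetric parallel Gaussian relay network with `L`
relays: an explicit formula for the gap, monotonicity in `L`, and its limit as
`L → ∞`. -/
theorem parallel_network_gap
    (PS Pr Nr Nd : ℝ) (hPS : 0 < PS) (hPr : 0 < Pr) (hNr : 0 < Nr) (hNd : 0 < Nd) :
    (∀ L : ℕ, 0 < L →
      (1/4) * Real.log (1 + 2 * L * PS / Nr)
        - (1/4) * Real.log (1 + 4 * L * PS * Pr / (2 * PS * Nd + 2 * Pr * Nr + Nd * Nr))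
      = (1/4) * Real.log (1 + 2 * PS * Nd * (2 * PS + Nr)
          / (4 * PS * Pr * Nr + Nr * (2 * PS * Nd + 2 * Pr * Nr + Nd * Nr) / L))) ∧
    (∀ L₁ L₂ : ℕ, 0 < L₁ → L₁ ≤ L₂ →
      (1/4) * Real.log (1 + 2 * L₁ * PS / Nr)
        - (1/4) * Real.log (1 + 4 * L₁ * PS * Pr / (2 * PS * Nd + 2 * Pr * Nr + Nd * Nr))
      ≤ (1/4) * Real.log (1 + 2 * L₂ * PS / Nr)
        - (1/4) * Real.log (1 + 4 * L₂ * PS * Pr / (2 * PS * Nd + 2 * Pr * Nr + Nd * Nr))) ∧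
    Filter.Tendsto
      (fun L : ℕ =>
        (1/4) * Real.log (1 + 2 * L * PS / Nr)
          - (1/4) * Real.log (1 + 4 * L * PS * Pr / (2 * PS * Nd + 2 * Pr * Nr + Nd * Nr)))
      Filter.atTop (nhds ((1/4) * Real.log (1 + Nd * (2 * PS + Nr) / (2 * Pr * Nr)))) := by
  set D := 2 * PS * Nd + 2 * Pr * Nr + Nd * Nr
  have hD : 0 < D := by positivity
  have hb : 0 < 4 * PS * Pr / D := by positivity
  have hsub := two_mul_div_sub_four_mul_div (PS := PS) hNr.ne' hD.ne'
  have hc : 0 ≤ 2 * PS / Nr - 4 * PS * Pr / D := by rw [hsub]; positivity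
  have hgap : ∀ L : ℕ, 0 < L →
      (1/4) * log (1 + 2 * L * PS / Nr) - (1/4) * log (1 + 4 * L * PS * Pr / D)
        = (1/4) * log (1 + 2 * PS * Nd * (2 * PS + Nr) / (Nr * D) / (4 * PS * Pr / D + (L : ℝ)⁻¹)) :=
      fun L hL => by
    rw [← hsub, ← log_one_add_mul_sub_log_one_add_mul hb.le (sub_nonneg.mp hc) (by positivity)]
    ring_nf
  refine ⟨fun L hL => ?_, fun L₁ L₂ hL₁ hle => ?_, ?_⟩
  · rw [hgap L hL]
    field_simp
  · rw [hgap L₁ hL₁, hgap L₂ (hL₁.trans_le hle)]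
    gcongr
  · have hlim := ((tendsto_one_add_div_add_inv_natCast
      (c := 2 * PS * Nd * (2 * PS + Nr) / (Nr * D)) hb.ne').log (by positivity)).const_mul (1/4)
    have hval : 2 * PS * Nd * (2 * PS + Nr) / (Nr * D) / (4 * PS * Pr / D)
        = Nd * (2 * PS + Nr) / (2 * Pr * Nr) := by
      field_simp
      ring
    rw [hval] at hlim
    exact hlim.congr' (eventually_gt_atTop 0 |>.mono fun L hL => (hgap L hL).symm)
end

section
/- Let P_S, P_r, N_r, N_d, c be positive real numbers and, for a positive integer L, define Γ_suf(L) = (1/4)·log(1 + 4·L²·c²·P_S·P_r/(2·L·c²·P_r·N_r + N_d·(2·P_S + N_r))) and Γ_nec(L) = (1/4)·log(1 + 2·L·P_S/N_r). Then (i) Γ_nec(L) − Γ_suf(L) = (1/4)·log(1 + ((4·P_S²·N_d + 2·P_S·N_r·N_d)/L) / (4·c²·P_S·P_r·N_r + 2·c²·P_r·N_r²/L + N_d·N_r·(2·P_S + N_r)/L²)); and (ii) Γ_nec(L) − Γ_suf(L) tends to 0 as L → ∞. -/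
/-!
The gap is `(1/4) log` of the ratio of the two arguments of the logarithms, and that ratio minus
one equals `2 L PS Nd (2 PS + Nr) / (Nr (2 L c² Pr Nr + Nd (2 PS + Nr) + 4 L² c² PS Pr))`.
Dividing numerator and denominator by `L²` gives the stated formula, whose fraction is `O(1/L)`;
continuity of `log` at `1` then gives the limit.
-/

open Real Filter Topology

theorem tendsto_div_div_add_div_add_div_sq_atTop (a b c d : ℝ) (hb : b ≠ 0) :
    Tendsto (fun x : ℝ => (a / x) / (b + c / x + d / x ^ 2)) atTop (𝓝 0) := by
  have hnum : Tendsto (fun x : ℝ => a / x) atTop (𝓝 0) :=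
    tendsto_const_nhds.div_atTop tendsto_id
  have hden : Tendsto (fun x : ℝ => b + c / x + d / x ^ 2) atTop (𝓝 b) := by
    simpa using (tendsto_const_nhds.add (tendsto_const_nhds.div_atTop tendsto_id)).add
      (tendsto_const_nhds.div_atTop (tendsto_pow_atTop (α := ℝ) two_ne_zero))
  rw [← zero_div b]
  exact hnum.div hden hb

section TwoHop

variable {PS Pr Nr Nd c : ℝ}

theorem two_hop_snr_ratio_eq (hPS : 0 < PS) (hPr : 0 < Pr) (hNr : 0 < Nr) (hNd : 0 < Nd)
    (hc : 0 < c) {l : ℝ} (hl : 0 < l) :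
    (1 + 2 * l * PS / Nr)
        / (1 + 4 * l^2 * c^2 * PS * Pr / (2 * l * c^2 * Pr * Nr + Nd * (2 * PS + Nr)))
      = 1 + ((4 * PS^2 * Nd + 2 * PS * Nr * Nd) / l)
          / (4 * c^2 * PS * Pr * Nr + 2 * c^2 * Pr * Nr^2 / l
              + Nd * Nr * (2 * PS + Nr) / l^2) := by
  have hD : 0 < 2 * l * c^2 * Pr * Nr + Nd * (2 * PS + Nr) := by positivity
  field_simp
  ring

theorem two_hop_gap_eq (hPS : 0 < PS) (hPr : 0 < Pr) (hNr : 0 < Nr) (hNd : 0 < Nd)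
    (hc : 0 < c) {l : ℝ} (hl : 0 < l) :
    (1/4) * log (1 + 2 * l * PS / Nr)
        - (1/4) * log (1 + 4 * l^2 * c^2 * PS * Pr
            / (2 * l * c^2 * Pr * Nr + Nd * (2 * PS + Nr)))
      = (1/4) * log (1 + ((4 * PS^2 * Nd + 2 * PS * Nr * Nd) / l)
          / (4 * c^2 * PS * Pr * Nr + 2 * c^2 * Pr * Nr^2 / l
              + Nd * Nr * (2 * PS + Nr) / l^2)) := by
  have hA : 0 < 1 + 2 * l * PS / Nr := by positivity
  have hB : 0 < 1 + 4 * l^2 * c^2 * PS * Pr / (2 * l * c^2 * Pr * Nr + Nd * (2 * PS + Nr)) := by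
    positivity
  rw [← mul_sub, ← log_div hA.ne' hB.ne', two_hop_snr_ratio_eq hPS hPr hNr hNd hc hl]

end TwoHop

/-- Part of Proposition 2 of the paper (symmetric two-hop Gaussian relay network):
an explicit formula for the gap `Γ_nec(L) − Γ_suf(L)` and its convergence to `0`
as the number of relays `L → ∞`. -/
theorem two_hop_gap_formula_and_limit
    (PS Pr Nr Nd c : ℝ) (hPS : 0 < PS) (hPr : 0 < Pr) (hNr : 0 < Nr) (hNd : 0 < Nd)
    (hc : 0 < c) :
    (∀ L : ℕ, 0 < L →
      (1/4) * Real.log (1 + 2 * L * PS / Nr)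
        - (1/4) * Real.log (1 + 4 * L^2 * c^2 * PS * Pr
            / (2 * L * c^2 * Pr * Nr + Nd * (2 * PS + Nr)))
      = (1/4) * Real.log (1 + ((4 * PS^2 * Nd + 2 * PS * Nr * Nd) / L)
          / (4 * c^2 * PS * Pr * Nr + 2 * c^2 * Pr * Nr^2 / L
              + Nd * Nr * (2 * PS + Nr) / L^2))) ∧
    Filter.Tendsto
      (fun L : ℕ =>
        (1/4) * Real.log (1 + 2 * L * PS / Nr)
          - (1/4) * Real.log (1 + 4 * L^2 * c^2 * PS * Pr
              / (2 * L * c^2 * Pr * Nr + Nd * (2 * PS + Nr))))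
      Filter.atTop (nhds 0) := by
  have hformula : ∀ L : ℕ, 0 < L → _ := fun L hL =>
    two_hop_gap_eq hPS hPr hNr hNd hc (Nat.cast_pos.mpr hL)
  refine ⟨hformula, ?_⟩
  have hfrac := (tendsto_div_div_add_div_add_div_sq_atTop (4 * PS^2 * Nd + 2 * PS * Nr * Nd)
    (4 * c^2 * PS * Pr * Nr) (2 * c^2 * Pr * Nr^2) (Nd * Nr * (2 * PS + Nr))
    (by positivity)).comp tendsto_natCast_atTop_atTop
  have hlog := ((continuousAt_log (by norm_num : (1 + 0 : ℝ) ≠ 0)).tendsto.comp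
    (tendsto_const_nhds.add hfrac)).const_mul (1/4 : ℝ)
  rw [add_zero, log_one, mul_zero] at hlog
  refine hlog.congr' ?_
  filter_upwards [eventually_gt_atTop 0] with L hL
  exact (hformula L hL).symm
end

section
/- Fix a positive integer L and positive real numbers P_S, N_r, N_d, c. For P_r > 0 define G(P_r) = (1/4)·log(1 + 2·L·P_S/N_r) − (1/4)·log(1 + 4·L²·c²·P_S·P_r/(2·L·c²·P_r·N_r + N_d·(2·P_S + N_r))). Then G is strictly decreasing on (0, ∞) and G(P_r) tends to 0 as P_r → ∞. -/
/-!
With `A = 4L²c²P_S`, `B = 2Lc²N_r` and `D = N_d(2P_S + N_r)`, the second logarithm is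
`log (1 + A x / (B x + D))`. The map `x ↦ A x / (B x + D)` is strictly increasing for
`x ≥ 0` (cross-multiplying leaves `A D x < A D y`) and tends to `A / B = 2LP_S/N_r`,
which is exactly the argument of the first logarithm.
-/

open Filter Set Topology

lemma strictMonoOn_mul_div_mul_add {A B D : ℝ} (hA : 0 < A) (hB : 0 ≤ B) (hD : 0 < D) :
    StrictMonoOn (fun x => A * x / (B * x + D)) (Ici 0) := by
  intro x hx y hy hxy
  have hx' : 0 < B * x + D := add_pos_of_nonneg_of_pos (mul_nonneg hB hx) hD
  have hy' : 0 < B * y + D := add_pos_of_nonneg_of_pos (mul_nonneg hB hy) hD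
  rw [div_lt_div_iff₀ hx' hy']
  nlinarith [mul_lt_mul_of_pos_left hxy (mul_pos hA hD)]

lemma tendsto_mul_div_mul_add_atTop (A D : ℝ) {B : ℝ} (hB : B ≠ 0) :
    Tendsto (fun x => A * x / (B * x + D)) atTop (𝓝 (A / B)) := by
  have hden : Tendsto (fun x => B + D / x) atTop (𝓝 B) := by
    simpa using tendsto_const_nhds.add (tendsto_const_nhds.div_atTop (tendsto_id (α := ℝ)))
  refine ((tendsto_const_nhds (x := A)).div hden hB).congr' ?_
  filter_upwards [eventually_gt_atTop 0] with x hx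
  simp only [Pi.div_apply]
  field_simp

/-- Second claim of Proposition 2 of the paper: for a symmetric two-hop Gaussian
relay network, the gap `G(P_r)` between the necessary bound and the sufficient
(linear-scheme) bound is strictly decreasing in the per-relay power `P_r` and
tends to `0` as `P_r → ∞`. -/
theorem two_hop_gap_decreasing_in_power
    (L : ℕ) (hL : 0 < L) (PS Nr Nd c : ℝ)
    (hPS : 0 < PS) (hNr : 0 < Nr) (hNd : 0 < Nd) (hc : 0 < c) :
    StrictAntiOn
      (fun Pr : ℝ =>
        (1/4) * Real.log (1 + 2 * L * PS / Nr)
          - (1/4) * Real.log (1 + 4 * L^2 * c^2 * PS * Pr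
              / (2 * L * c^2 * Pr * Nr + Nd * (2 * PS + Nr))))
      (Set.Ioi (0 : ℝ)) ∧
    Filter.Tendsto
      (fun Pr : ℝ =>
        (1/4) * Real.log (1 + 2 * L * PS / Nr)
          - (1/4) * Real.log (1 + 4 * L^2 * c^2 * PS * Pr
              / (2 * L * c^2 * Pr * Nr + Nd * (2 * PS + Nr))))
      Filter.atTop (nhds 0) := by
  have hrational : ∀ Pr : ℝ, 4 * L^2 * c^2 * PS * Pr / (2 * L * c^2 * Pr * Nr + Nd * (2 * PS + Nr))
      = (4 * L^2 * c^2 * PS) * Pr / ((2 * L * c^2 * Nr) * Pr + Nd * (2 * PS + Nr)) :=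
    fun Pr => by ring
  have hratio : (4 * L^2 * c^2 * PS) / (2 * L * c^2 * Nr) = 2 * L * PS / Nr := by
    field_simp; ring
  simp only [hrational, ← hratio]
  set A := 4 * (L : ℝ)^2 * c^2 * PS
  set B := 2 * (L : ℝ) * c^2 * Nr
  set D := Nd * (2 * PS + Nr)
  have hA : 0 < A := by positivity
  have hB : 0 < B := by positivity
  have hD : 0 < D := by positivity
  constructor
  · rintro x (hx : 0 < x) y (hy : 0 < y) hxy
    have hmono := strictMonoOn_mul_div_mul_add hA hB.le hD hx.le hy.le hxy
    have := Real.log_lt_log (by positivity) (add_lt_add_right hmono 1)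
    linarith
  · have hlog := ((tendsto_mul_div_mul_add_atTop A D hB.ne').const_add 1).log (by positivity)
    simpa using (hlog.const_mul (1 / 4 : ℝ)).const_sub ((1 / 4) * Real.log (1 + A / B))
end

section
/- Let n be a positive integer and let c > 0 and P > 0 be real numbers. For every vector p = (p_1, …, p_n) with p_i ≥ 0 for all i and ∑_{i=1}^n p_i ≤ P, one has ∏_{i=1}^n p_i/(p_i + c) ≤ ((P/n)/(P/n + c))^n; that is, the equal allocation p_i = P/n maximizes the product ∏_i p_i/(p_i + c) over the simplex of nonnegative allocations with total budget P. -/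
/-!
The map `x ↦ x / (x + c)` is concave on `[0, ∞)`, so it lies below its tangent line at
`a = P / n`; summing the tangent bound over a budget `∑ pᵢ ≤ n a` shows that the arithmetic mean of
the factors `pᵢ / (pᵢ + c)` is at most `a / (a + c)`, and AM-GM turns this into the bound on their
product.
-/

open Finset

theorem Real.prod_le_arith_mean_pow {ι : Type*} (s : Finset ι) (z : ι → ℝ)
    (hz : ∀ i ∈ s, 0 ≤ z i) : ∏ i ∈ s, z i ≤ ((∑ i ∈ s, z i) / #s) ^ #s := by
  rcases s.eq_empty_or_nonempty with rfl | hs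
  · simp
  have hcard : (0 : ℝ) < #s := by exact_mod_cast hs.card_pos
  have hgm := Real.geom_mean_le_arith_mean s 1 z (fun _ _ => zero_le_one) (by simpa using hcard) hz
  simp only [Pi.one_apply, Real.rpow_one, one_mul, sum_const, nsmul_eq_mul, mul_one] at hgm
  calc ∏ i ∈ s, z i = ((∏ i ∈ s, z i) ^ (#s : ℝ)⁻¹) ^ #s := by
        rw [← Real.rpow_natCast, ← Real.rpow_mul (prod_nonneg hz), inv_mul_cancel₀ hcard.ne',
          Real.rpow_one]
    _ ≤ ((∑ i ∈ s, z i) / #s) ^ #s := by gcongr; exact Real.rpow_nonneg (prod_nonneg hz) _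

theorem div_add_le_tangent {a c x : ℝ} (hc : 0 ≤ c) (ha : 0 < a + c) (hx : 0 < x + c) :
    x / (x + c) ≤ a / (a + c) + c / (a + c) ^ 2 * (x - a) := by
  have tangent_gap : a / (a + c) + c / (a + c) ^ 2 * (x - a) - x / (x + c)
      = c * (x - a) ^ 2 / ((a + c) ^ 2 * (x + c)) := by
    field_simp; ring
  have : 0 ≤ c * (x - a) ^ 2 / ((a + c) ^ 2 * (x + c)) := by positivity
  linarith

theorem sum_div_add_le_card_mul {ι : Type*} (s : Finset ι) {a c : ℝ} (p : ι → ℝ) (hc : 0 ≤ c)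
    (ha : 0 < a + c) (hp : ∀ i ∈ s, 0 < p i + c) (hsum : ∑ i ∈ s, p i ≤ #s * a) :
    ∑ i ∈ s, p i / (p i + c) ≤ #s * (a / (a + c)) := by
  calc ∑ i ∈ s, p i / (p i + c)
      ≤ ∑ i ∈ s, (a / (a + c) + c / (a + c) ^ 2 * (p i - a)) :=
        sum_le_sum fun i hi => div_add_le_tangent hc ha (hp i hi)
    _ = #s * (a / (a + c)) + c / (a + c) ^ 2 * (∑ i ∈ s, p i - #s * a) := by
        rw [sum_add_distrib, ← mul_sum, sum_sub_distrib]; simp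
    _ ≤ #s * (a / (a + c)) := by
        have : c / (a + c) ^ 2 * (∑ i ∈ s, p i - #s * a) ≤ 0 :=
          mul_nonpos_of_nonneg_of_nonpos (by positivity) (by linarith)
        linarith

/-- Uniform allocation optimality (Theorem 3 of the paper, case of equal noise
variances): for `c > 0` and budget `P > 0`, every nonnegative allocation
`p` with `∑ p_i ≤ P` satisfies `∏ p_i/(p_i + c) ≤ ((P/n)/(P/n + c))^n`. -/
theorem uniform_allocation_maximizes_product
    (n : ℕ) (hn : 0 < n) (c P : ℝ) (hc : 0 < c) (hP : 0 < P)
    (p : Fin n → ℝ) (hp : ∀ i, 0 ≤ p i) (hsum : ∑ i, p i ≤ P) :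
    ∏ i, p i / (p i + c) ≤ ((P / n) / (P / n + c)) ^ n := by
  have hn' : (0 : ℝ) < n := by exact_mod_cast hn
  have hpc : ∀ i ∈ univ, 0 < p i + c := fun i _ => add_pos_of_nonneg_of_pos (hp i) hc
  have hq : ∀ i ∈ univ, 0 ≤ p i / (p i + c) := fun i hi => div_nonneg (hp i) (hpc i hi).le
  have hmean : (∑ i, p i / (p i + c)) / n ≤ (P / n) / (P / n + c) := by
    rw [div_le_iff₀' hn']
    simpa using sum_div_add_le_card_mul (a := P / n) univ p hc.le (by positivity) hpc
      (by simpa [mul_div_cancel₀ _ hn'.ne'] using hsum)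
  calc ∏ i, p i / (p i + c)
      ≤ ((∑ i, p i / (p i + c)) / n) ^ n := by
        simpa using Real.prod_le_arith_mean_pow univ _ hq
    _ ≤ ((P / n) / (P / n + c)) ^ n :=
        pow_le_pow_left₀ (div_nonneg (sum_nonneg hq) hn'.le) hmean n
end

section
/- Let λ, k, f∞, m, n_w be positive real numbers with λ⁴·k·f∞ < 1, and let f : (0, ∞) → ℝ be a function satisfying 0 ≤ f(x) ≤ f∞ + m/x for all x ≥ n_w. Let (α_t)_{t ∈ ℕ} be a sequence with α₀ ≥ n_w and α_{t+1} = λ²·(λ²·k·α_t + n_w)·f(α_t) + n_w for every t. Then α_t ≥ n_w for all t and the sequence (α_t) is bounded above. -/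
/-!
Each term is `n_w` plus a product of nonnegative factors, so `α_t ≥ n_w`. On `[n_w, ∞)` the bound on
`f` makes the recursion map at most affine with slope `c = λ⁴·k·f∞ < 1`, and every sequence with
`u (t + 1) ≤ c · u t + D` stays below `max (u 0) (D / (1 - c))`.
-/

theorem le_max_div_one_sub_of_le_mul_add {u : ℕ → ℝ} {c D : ℝ} (hc₀ : 0 ≤ c) (hc₁ : c < 1)
    (h : ∀ t, u (t + 1) ≤ c * u t + D) (t : ℕ) : u t ≤ max (u 0) (D / (1 - c)) := by
  set M := max (u 0) (D / (1 - c))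
  have hD : D ≤ (1 - c) * M := by
    rw [← div_le_iff₀' (by linarith)]
    exact le_max_right _ _
  induction t with
  | zero => exact le_max_left _ _
  | succ t ih =>
    calc u (t + 1) ≤ c * u t + D := h t
      _ ≤ c * M + (1 - c) * M := by gcongr
      _ = M := by ring

theorem variance_map_le_affine {lam k finf m nw x y : ℝ} (hk : 0 ≤ k) (hm : 0 ≤ m)
    (hnw : 0 < nw) (hx : nw ≤ x) (hy : y ≤ finf + m / x) :
    lam ^ 2 * (lam ^ 2 * k * x + nw) * y + nw ≤
      lam ^ 4 * k * finf * x + (lam ^ 4 * k * m + lam ^ 2 * (nw * finf + m) + nw) := by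
  have hx₀ : 0 < x := hnw.trans_le hx
  have hnw_div : nw * (m / x) ≤ m := by
    rw [mul_div_assoc', div_le_iff₀ hx₀, mul_comm nw]
    exact mul_le_mul_of_nonneg_left hx hm
  calc lam ^ 2 * (lam ^ 2 * k * x + nw) * y + nw
      ≤ lam ^ 2 * (lam ^ 2 * k * x + nw) * (finf + m / x) + nw := by gcongr
    _ = lam ^ 4 * k * finf * x
          + (lam ^ 4 * k * (m / x * x) + lam ^ 2 * (nw * finf + nw * (m / x)) + nw) := by ring
    _ ≤ lam ^ 4 * k * finf * x + (lam ^ 4 * k * m + lam ^ 2 * (nw * finf + m) + nw) := by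
      rw [div_mul_cancel₀ m hx₀.ne']
      gcongr

theorem half_duplex_variance_bounded_general
    (lam k finf m nw : ℝ)
    (hk : 0 < k) (hfinf : 0 < finf) (hm : 0 < m) (hnw : 0 < nw)
    (hcond : lam ^ 4 * k * finf < 1)
    (f : ℝ → ℝ) (hf : ∀ x : ℝ, nw ≤ x → 0 ≤ f x ∧ f x ≤ finf + m / x)
    (α : ℕ → ℝ) (hα₀ : nw ≤ α 0)
    (hrec : ∀ t : ℕ, α (t + 1) = lam ^ 2 * (lam ^ 2 * k * α t + nw) * f (α t) + nw) :
    (∀ t : ℕ, nw ≤ α t) ∧ ∃ M : ℝ, ∀ t : ℕ, α t ≤ M := by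
  have hge : ∀ t, nw ≤ α t := by
    intro t
    induction t with
    | zero => exact hα₀
    | succ t ih =>
      have hα : 0 ≤ α t := (hnw.trans_le ih).le
      have hfα : 0 ≤ f (α t) := (hf (α t) ih).1
      rw [hrec t, le_add_iff_nonneg_left]
      positivity
  have hstep : ∀ t, α (t + 1) ≤
      lam ^ 4 * k * finf * α t + (lam ^ 4 * k * m + lam ^ 2 * (nw * finf + m) + nw) := fun t => by
    rw [hrec t]
    exact variance_map_le_affine hk.le hm.le hnw (hge t) (hf (α t) (hge t)).2
  exact ⟨hge, _, le_max_div_one_sub_of_le_mul_add (by positivity) hcond hstep⟩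

/-- Boundedness argument in the proof of Theorem 8 of the paper (Appendix B):
if `λ⁴·k·f∞ < 1` and `0 ≤ f(x) ≤ f∞ + m/x` for all `x ≥ n_w`, then the
state-variance recursion `α_{t+1} = λ²·(λ²·k·α_t + n_w)·f(α_t) + n_w`, started
from `α₀ ≥ n_w`, stays `≥ n_w` and is bounded above. -/
theorem half_duplex_variance_bounded
    (lam k finf m nw : ℝ)
    (hlam : 0 < lam) (hk : 0 < k) (hfinf : 0 < finf) (hm : 0 < m) (hnw : 0 < nw)
    (hcond : lam ^ 4 * k * finf < 1)
    (f : ℝ → ℝ) (hf : ∀ x : ℝ, nw ≤ x → 0 ≤ f x ∧ f x ≤ finf + m / x)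
    (α : ℕ → ℝ) (hα₀ : nw ≤ α 0)
    (hrec : ∀ t : ℕ, α (t + 1) = lam ^ 2 * (lam ^ 2 * k * α t + nw) * f (α t) + nw) :
    (∀ t : ℕ, nw ≤ α t) ∧ ∃ M : ℝ, ∀ t : ℕ, α t ≤ M :=
  half_duplex_variance_bounded_general lam k finf m nw hk hfinf hm hnw hcond f hf α hα₀ hrec
end
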